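/- arXiv:1607.01973 — 4 statements merged into one kernel-verified Lean document; each statement's English description precedes it below -/
import Mathlib

section
/- For every homomorphism of hyperrings f : R₁ → R₂, the induced map 𝓕(f) : 𝓕(R₁) → 𝓕(R₂) sending a nonempty subset A ⊆ R₁ to its image f(A) = {f(a) : a ∈ A} is a strong morphism of fuzzy rings. -/
open Set

/-! ### Set-level operations induced by a hyperoperation -/

/-- The sum of two subsets with respect to a hyperaddition. -/
def sAddOf {R : Type*} (add : R → R → Set R) (X Y : Set R) : Set R :=
  ⋃ x ∈ X, ⋃ y ∈ Y, add x y

/-- The hypersum of a list of elements (padded with a final `zero`). -/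
def hypersum {R : Type*} (add : R → R → Set R) (zero : R) (l : List R) : Set R :=
  l.foldr (fun a X => sAddOf add {a} X) {zero}

/-- The collection of all finite (nonempty) hypersums of elements. -/
def sumSet {R : Type*} (add : R → R → Set R) : Set (Set R) :=
  {A | ∃ (a : R) (l : List R), A = l.foldr (fun x X => sAddOf add {x} X) ({a} : Set R)}

/-- The nonempty subsets of a type. -/
abbrev NSet (R : Type*) := {A : Set R // A.Nonempty}

/-- Image of a nonempty subset under a map. -/
def NSet.map {R S : Type*} (f : R → S) (A : NSet R) : NSet S := ⟨f '' A.1, A.2.image f⟩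

/-- Elementwise product of nonempty subsets. -/
def nsMul {R : Type*} (mul : R → R → R) (A B : NSet R) : NSet R :=
  ⟨Set.image2 mul A.1 B.1, A.2.image2 B.2⟩

/-! ### Hyperrings and hyperfields -/

/-- The data `(add, mul, zero, one)` forms a hyperring: `(R, add)` is a canonical
hypergroup, `(R, mul)` is a commutative unital monoid, and multiplication
distributes over hyperaddition with `zero` absorbing. -/
structure IsHyperring {R : Type*} (add : R → R → Set R) (mul : R → R → R)
    (zero one : R) : Prop where
  add_nonempty : ∀ a b, (add a b).Nonempty
  add_comm : ∀ a b, add a b = add b a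
  add_zero : ∀ a, add a zero = {a}
  exists_neg : ∀ a, ∃! b, zero ∈ add a b
  add_assoc : ∀ a b c, sAddOf add (add a b) {c} = sAddOf add {a} (add b c)
  reversible : ∀ a b b' c, zero ∈ add b b' → (a ∈ add b c ↔ c ∈ add a b')
  mul_comm : ∀ a b, mul a b = mul b a
  mul_assoc : ∀ a b c, mul (mul a b) c = mul a (mul b c)
  mul_one : ∀ a, mul a one = a
  mul_zero : ∀ a, mul a zero = zero
  distrib : ∀ a b c, mul a '' add b c = add (mul a b) (mul a c)

/-- The data forms a hyperfield: a hyperring in which every nonzero element is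
a multiplicative unit. -/
structure IsHyperfield {R : Type*} (add : R → R → Set R) (mul : R → R → R)
    (zero one : R) extends IsHyperring add mul zero one : Prop where
  one_ne_zero : one ≠ zero
  inv : ∀ a, a ≠ zero → ∃ b, mul a b = one

/-- A (bundled) hyperring structure on `R`. -/
structure Hyperring (R : Type*) where
  add : R → R → Set R
  mul : R → R → R
  zero : R
  one : R
  isHyperring : IsHyperring add mul zero one

/-- The hyperadditive inverse. -/
noncomputable def Hyperring.neg {R : Type*} (H : Hyperring R) (a : R) : R :=
  (H.isHyperring.exists_neg a).exists.choose

/-- A unit of a hyperring. -/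
def Hyperring.IsUnit {R : Type*} (H : Hyperring R) (a : R) : Prop :=
  ∃ b, H.mul a b = H.one

/-- A (bundled) hyperfield structure on `R`. -/
structure Hyperfield (R : Type*) extends Hyperring R where
  one_ne_zero : one ≠ zero
  inv : ∀ a, a ≠ zero → ∃ b, mul a b = one

/-- A homomorphism of hyperrings (with respect to unbundled data):
`f 0 = 0`, `f 1 = 1`, `f(a+b) ⊆ f a + f b` and `f(a×b) = f a × f b`. -/
structure IsHyperringHom {R S : Type*}
    (addR : R → R → Set R) (mulR : R → R → R) (zeroR oneR : R)
    (addS : S → S → Set S) (mulS : S → S → S) (zeroS oneS : S)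
    (f : R → S) : Prop where
  map_zero : f zeroR = zeroS
  map_one : f oneR = oneS
  map_add : ∀ a b, f '' addR a b ⊆ addS (f a) (f b)
  map_mul : ∀ a b, f (mulR a b) = mulS (f a) (f b)

/-- A strict homomorphism of hyperrings: as above, but `f(a+b) = f a + f b`. -/
structure IsStrictHyperringHom {R S : Type*}
    (addR : R → R → Set R) (mulR : R → R → R) (zeroR oneR : R)
    (addS : S → S → Set S) (mulS : S → S → S) (zeroS oneS : S)
    (f : R → S) : Prop where
  map_zero : f zeroR = zeroS
  map_one : f oneR = oneS
  map_add : ∀ a b, f '' addR a b = addS (f a) (f b)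
  map_mul : ∀ a b, f (mulR a b) = mulS (f a) (f b)

/-! ### Fuzzy rings -/

/-- The data of a fuzzy ring: two binary operations, neutral elements,
a distinguished element `eps` and a set `null` of null elements. -/
structure FuzzyData (K : Type*) where
  add : K → K → K
  mul : K → K → K
  zero : K
  one : K
  eps : K
  null : Set K

namespace FuzzyData

/-- Multiplicative units. -/
def IsUnit {K : Type*} (D : FuzzyData K) (a : K) : Prop := ∃ b, D.mul a b = D.one

/-- Sum of a list of elements. -/
def sum {K : Type*} (D : FuzzyData K) (l : List K) : K := l.foldr D.add D.zero

/-- A fuzzy ring is field-like if for each pair of units `a, b` there exists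
`c ∈ K^× ∪ {0}` with `a + b + c` null. -/
def FieldLike {K : Type*} (D : FuzzyData K) : Prop :=
  ∀ a b, D.IsUnit a → D.IsUnit b →
    ∃ c, (D.IsUnit c ∨ c = D.zero) ∧ D.add (D.add a b) c ∈ D.null

end FuzzyData

/-- Dress's fuzzy ring axioms (FR0)–(FR7). -/
structure IsFuzzyRing {K : Type*} (D : FuzzyData K) : Prop where
  add_comm : ∀ a b, D.add a b = D.add b a
  add_assoc : ∀ a b c, D.add (D.add a b) c = D.add a (D.add b c)
  add_zero : ∀ a, D.add a D.zero = a
  mul_comm : ∀ a b, D.mul a b = D.mul b a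
  mul_assoc : ∀ a b c, D.mul (D.mul a b) c = D.mul a (D.mul b c)
  mul_one : ∀ a, D.mul a D.one = a
  zero_mul : ∀ a, D.mul D.zero a = D.zero
  unit_distrib : ∀ a b c, D.IsUnit a → D.mul a (D.add b c) = D.add (D.mul a b) (D.mul a c)
  eps_sq : D.mul D.eps D.eps = D.one
  null_add : ∀ a ∈ D.null, ∀ b ∈ D.null, D.add a b ∈ D.null
  mul_null : ∀ (a : K), ∀ b ∈ D.null, D.mul a b ∈ D.null
  zero_mem_null : D.zero ∈ D.null
  one_not_mem_null : D.one ∉ D.null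
  fr5 : ∀ a, D.IsUnit a → (D.add D.one a ∈ D.null ↔ a = D.eps)
  fr6 : ∀ a b c d, D.add a b ∈ D.null → D.add c d ∈ D.null →
    D.add (D.mul a c) (D.mul D.eps (D.mul b d)) ∈ D.null
  fr7 : ∀ a b c d, D.add a (D.mul b (D.add c d)) ∈ D.null →
    D.add (D.add a (D.mul b c)) (D.mul b d) ∈ D.null

/-- A weak morphism of fuzzy rings: a map inducing a group homomorphism on units
which preserves null sums of units. -/
structure IsWeakMorphism {K L : Type*} (D : FuzzyData K) (E : FuzzyData L)
    (f : K → L) : Prop where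
  map_unit : ∀ a, D.IsUnit a → E.IsUnit (f a)
  map_one : f D.one = E.one
  map_mul : ∀ a b, D.IsUnit a → D.IsUnit b → f (D.mul a b) = E.mul (f a) (f b)
  map_null : ∀ l : List K, (∀ a ∈ l, D.IsUnit a) →
    D.sum l ∈ D.null → E.sum (l.map f) ∈ E.null

/-- A strong morphism of fuzzy rings. -/
structure IsStrongMorphism {K L : Type*} (D : FuzzyData K) (E : FuzzyData L)
    (f : K → L) : Prop where
  map_one : f D.one = E.one
  map_zero : f D.zero = E.zero
  map_mul : ∀ a b, D.IsUnit a → f (D.mul a b) = E.mul (f a) (f b)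
  map_null : ∀ l : List (K × K),
    D.sum (l.map fun p => D.mul p.1 p.2) ∈ D.null →
    E.sum (l.map fun p => E.mul (f p.1) (f p.2)) ∈ E.null

/-! ### The functor 𝓕 from hyperrings to fuzzy rings -/

/-- The fuzzy-ring data `𝓕(R)` associated to a hyperring `R`: the nonempty
subsets of `R` with subset addition and multiplication, `ε = {-1}`, and null
elements the subsets containing `0`. -/
noncomputable def Hyperring.Fuzzy {R : Type*} (H : Hyperring R) : FuzzyData (NSet R) where
  add A B := ⟨sAddOf H.add A.1 B.1, by
    obtain ⟨a, ha⟩ := A.2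
    obtain ⟨b, hb⟩ := B.2
    obtain ⟨c, hc⟩ := H.isHyperring.add_nonempty a b
    exact ⟨c, Set.mem_biUnion ha (Set.mem_biUnion hb hc)⟩⟩
  mul A B := nsMul H.mul A B
  zero := ⟨{H.zero}, Set.singleton_nonempty _⟩
  one := ⟨{H.one}, Set.singleton_nonempty _⟩
  eps := ⟨{H.neg H.one}, Set.singleton_nonempty _⟩
  null := {A | H.zero ∈ A.1}

/-! ### The functor 𝒢 from field-like fuzzy rings to hyperfields -/

/-- The carrier `K^× ∪ {0}` of `𝒢(K)`. -/
def GCarrier {K : Type*} (D : FuzzyData K) := {a : K // D.IsUnit a ∨ a = D.zero}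

/-- The hyperaddition of `𝒢(K)`: `a ⊕ b = {c : a + b + ε c ∈ K₀}`. -/
def Gadd {K : Type*} (D : FuzzyData K) (a b : GCarrier D) : Set (GCarrier D) :=
  {c | D.add (D.add a.1 b.1) (D.mul D.eps c.1) ∈ D.null}

/-- The zero element of `𝒢(K)`. -/
def Gzero {K : Type*} (D : FuzzyData K) : GCarrier D := ⟨D.zero, Or.inr rfl⟩

/-- The one element of `𝒢(K)`. -/
def Gone {K : Type*} {D : FuzzyData K} (h : IsFuzzyRing D) : GCarrier D :=
  ⟨D.one, Or.inl ⟨D.one, h.mul_one D.one⟩⟩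

/-- The multiplication of `𝒢(K)`. -/
def Gmul {K : Type*} {D : FuzzyData K} (h : IsFuzzyRing D) (a b : GCarrier D) :
    GCarrier D :=
  ⟨D.mul a.1 b.1, by
    rcases b.2 with hb | hb
    · rcases a.2 with ha | ha
      · left
        obtain ⟨a', ha'⟩ := ha
        obtain ⟨b', hb'⟩ := hb
        refine ⟨D.mul a' b', ?_⟩
        rw [h.mul_assoc a.1 b.1 (D.mul a' b'), ← h.mul_assoc b.1 a' b',
          h.mul_comm b.1 a', h.mul_assoc a' b.1 b', hb', h.mul_one, ha']
      · right; rw [ha, h.zero_mul]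
    · right; rw [hb, h.mul_comm, h.zero_mul]⟩

open Classical in
/-- The extension of a weak morphism to `𝒢(K) → 𝒢(L)`, sending `0` to `0`. -/
noncomputable def Gmap {K L : Type*} {D : FuzzyData K} {E : FuzzyData L} {f : K → L}
    (hf : IsWeakMorphism D E f) (a : GCarrier D) : GCarrier E :=
  if h : a.1 = D.zero then Gzero E
  else ⟨f a.1, Or.inl (hf.map_unit a.1 (a.2.resolve_right h))⟩

/-- The canonical map `F → 𝒢(𝓕(F))`, `x ↦ {x}`, for a hyperfield `F`. -/
noncomputable def toG {R : Type*} (F : Hyperfield R) (x : R) :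
    GCarrier F.toHyperring.Fuzzy :=
  ⟨⟨{x}, Set.singleton_nonempty x⟩, by
    by_cases hx : x = F.toHyperring.zero
    · exact Or.inr (by subst hx; rfl)
    · obtain ⟨y, hy⟩ := F.inv x hx
      exact Or.inl ⟨⟨{y}, Set.singleton_nonempty y⟩, by
        apply Subtype.ext
        show Set.image2 F.toHyperring.mul {x} {y} = {F.toHyperring.one}
        rw [Set.image2_singleton, hy]⟩⟩

/-! ### Doubly-distributive hyperfields -/

/-- A hyperfield is doubly-distributive if `(a+b)(c+d) = ac + ad + bc + bd`. -/
def Hyperfield.DoublyDistributive {R : Type*} (F : Hyperfield R) : Prop :=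
  ∀ a b c d : R,
    Set.image2 F.mul (F.add a b) (F.add c d) =
      sAddOf F.add (sAddOf F.add (F.add (F.mul a c) (F.mul a d)) {F.mul b c})
        {F.mul b d}

/-! ### The tropical hyperfield of a totally ordered abelian group, and K_Γ -/

/-- The hyperaddition of the hyperfield `H_Γ` on `Γ ∪ {0}`. -/
def tropAdd (Γ : Type*) [CommGroup Γ] [LinearOrder Γ] [IsOrderedMonoid Γ] (x y : WithZero Γ) :
    Set (WithZero Γ) :=
  if x = y then Set.Iic x else {max x y}

/-- The underlying set of the fuzzy ring `K_Γ`: all singletons and all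
intervals `[0, a]` in `Γ ∪ {0}`. -/
def KgSet (Γ : Type*) [CommGroup Γ] [LinearOrder Γ] [IsOrderedMonoid Γ] : Set (Set (WithZero Γ)) :=
  {A | (∃ a : WithZero Γ, A = {a}) ∨ ∃ a : WithZero Γ, A = Set.Iic a}

open Classical in
/-- The casewise addition of `K_Γ`. -/
noncomputable def KgAdd (Γ : Type*) [CommGroup Γ] [LinearOrder Γ] [IsOrderedMonoid Γ]
    (A B : Set (WithZero Γ)) : Set (WithZero Γ) :=
  if h : ∃ a b : WithZero Γ, A = {a} ∧ B = {b} then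
    if h.choose = h.choose_spec.choose then Set.Iic h.choose
    else {max h.choose h.choose_spec.choose}
  else if h : ∃ a b : WithZero Γ, A = {a} ∧ B = Set.Iic b then
    if h.choose ≤ h.choose_spec.choose then Set.Iic h.choose_spec.choose
    else {h.choose}
  else if h : ∃ a b : WithZero Γ, A = Set.Iic a ∧ B = {b} then
    if h.choose_spec.choose ≤ h.choose then Set.Iic h.choose
    else {h.choose_spec.choose}
  else if h : ∃ a b : WithZero Γ, A = Set.Iic a ∧ B = Set.Iic b then
    Set.Iic (max h.choose h.choose_spec.choose)
  else ∅

/-- The carrier of `K_Γ` as a subtype. -/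
def Kg (Γ : Type*) [CommGroup Γ] [LinearOrder Γ] [IsOrderedMonoid Γ] := {A : Set (WithZero Γ) // A ∈ KgSet Γ}

/-- The inclusion `K_Γ → 𝓕(H_Γ)`. -/
noncomputable def KgToF (Γ : Type*) [CommGroup Γ] [LinearOrder Γ] [IsOrderedMonoid Γ] (A : Kg Γ) : NSet (WithZero Γ) :=
  ⟨A.1, by
    rcases A.2 with ⟨a, h⟩ | ⟨a, h⟩
    · rw [h]; exact Set.singleton_nonempty a
    · rw [h]; exact ⟨a, Set.mem_Iic.2 le_rfl⟩⟩

/-! ### Grassmann–Plücker functions -/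

/-- A Grassmann–Plücker function of rank `r+1` on `E` with coefficients in a
hyperfield `F`. -/
noncomputable def IsGPHyper {R E : Type*} [Fintype E] (F : Hyperfield R) (r : ℕ)
    (φ : (Fin (r + 1) → E) → R) : Prop :=
  (∃ x, φ x ≠ F.zero) ∧
  (∀ x : Fin (r + 1) → E, ∀ i j : Fin (r + 1), i ≠ j → x i = x j → φ x = F.zero) ∧
  (∀ (x : Fin (r + 1) → E) (σ : Equiv.Perm (Fin (r + 1))), Equiv.Perm.sign σ = -1 →
    φ (x ∘ σ) = F.toHyperring.neg (φ x)) ∧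
  (∀ (x : Fin (r + 2) → E) (y : Fin r → E),
    F.zero ∈ hypersum F.add F.zero
      ((List.finRange (r + 2)).map fun (k : Fin (r + 2)) =>
        if Even (k : ℕ)
        then F.toHyperring.neg (F.mul (φ (x ∘ k.succAbove)) (φ (Fin.cons (x k) y)))
        else F.mul (φ (x ∘ k.succAbove)) (φ (Fin.cons (x k) y))))

/-- A Grassmann–Plücker function of rank `r+1` on `E` with coefficients in a
fuzzy ring (given by its data `D`). -/
def IsGPFuzzy {K E : Type*} [Fintype E] (D : FuzzyData K) (r : ℕ)
    (φ : (Fin (r + 1) → E) → K) : Prop :=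
  (∀ x, D.IsUnit (φ x) ∨ φ x = D.zero) ∧
  (∃ x, φ x ≠ D.zero) ∧
  (∀ x : Fin (r + 1) → E, ∀ i j : Fin (r + 1), i ≠ j → x i = x j → φ x = D.zero) ∧
  (∀ (x : Fin (r + 1) → E) (σ : Equiv.Perm (Fin (r + 1))), Equiv.Perm.sign σ = -1 →
    φ (x ∘ σ) = D.mul D.eps (φ x)) ∧
  (∀ (x : Fin (r + 2) → E) (y : Fin r → E),
    D.sum ((List.finRange (r + 2)).map fun (k : Fin (r + 2)) =>
      if Even (k : ℕ)
      then D.mul D.eps (D.mul (φ (x ∘ k.succAbove)) (φ (Fin.cons (x k) y)))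
      else D.mul (φ (x ∘ k.succAbove)) (φ (Fin.cons (x k) y))) ∈ D.null)

/-! Since `f (a + b) ⊆ f a + f b`, the image of a finite sum of subsets lies in the sum of
the images, while `f` commutes exactly with products of subsets. Hence the image of a null
sum of products, which contains `f 0 = 0`, lies in the corresponding sum of products of images. -/

theorem sAddOf_mono {R : Type*} {add : R → R → Set R} {X X' Y Y' : Set R}
    (hX : X ⊆ X') (hY : Y ⊆ Y') : sAddOf add X Y ⊆ sAddOf add X' Y' :=
  biUnion_mono hX fun _ _ => biUnion_mono hY fun _ _ => subset_rfl

theorem image_sAddOf_subset {R S : Type*} {addR : R → R → Set R} {addS : S → S → Set S}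
    {f : R → S} (hf : ∀ a b, f '' addR a b ⊆ addS (f a) (f b)) (X Y : Set R) :
    f '' sAddOf addR X Y ⊆ sAddOf addS (f '' X) (f '' Y) := by
  rintro _ ⟨z, hz, rfl⟩
  simp only [sAddOf, mem_iUnion] at hz ⊢
  obtain ⟨x, hx, y, hy, hz⟩ := hz
  exact ⟨f x, mem_image_of_mem f hx, f y, mem_image_of_mem f hy, hf x y (mem_image_of_mem f hz)⟩

theorem NSet.map_nsMul {R S : Type*} {mulR : R → R → R} {mulS : S → S → S} {f : R → S}
    (hf : ∀ a b, f (mulR a b) = mulS (f a) (f b)) (A B : NSet R) :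
    NSet.map f (nsMul mulR A B) = nsMul mulS (NSet.map f A) (NSet.map f B) := by
  refine Subtype.ext ?_
  change f '' image2 mulR A.1 B.1 = image2 mulS (f '' A.1) (f '' B.1)
  rw [image_image2, image2_image_left, image2_image_right]
  exact image2_congr fun a _ b _ => hf a b

theorem NSet.map_singleton {R S : Type*} (f : R → S) (a : R) :
    NSet.map f ⟨{a}, singleton_nonempty a⟩ = ⟨{f a}, singleton_nonempty (f a)⟩ :=
  Subtype.ext image_singleton

theorem Hyperring.image_fuzzy_sum_subset {R₁ R₂ : Type*} {H₁ : Hyperring R₁}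
    {H₂ : Hyperring R₂} {f : R₁ → R₂} (hf₀ : f H₁.zero = H₂.zero)
    (hf : ∀ a b, f '' H₁.add a b ⊆ H₂.add (f a) (f b)) (L : List (NSet R₁)) :
    f '' (H₁.Fuzzy.sum L).1 ⊆ (H₂.Fuzzy.sum (L.map (NSet.map f))).1 := by
  induction L with
  | nil => exact image_singleton.trans_subset (by rw [hf₀]; rfl)
  | cons A L ih => exact (image_sAddOf_subset hf _ _).trans (sAddOf_mono subset_rfl ih)

/-- For every homomorphism of hyperrings `f : R₁ → R₂`, the induced
map `𝓕(f) : 𝓕(R₁) → 𝓕(R₂)`, `A ↦ f(A)`, is a strong morphism of fuzzy rings. -/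
theorem fuzzy_map_isStrongMorphism {R₁ R₂ : Type*}
    (H₁ : Hyperring R₁) (H₂ : Hyperring R₂) (f : R₁ → R₂)
    (hf : IsHyperringHom H₁.add H₁.mul H₁.zero H₁.one
      H₂.add H₂.mul H₂.zero H₂.one f) :
    IsStrongMorphism H₁.Fuzzy H₂.Fuzzy (NSet.map f) := by
  have map_mul (A B : NSet R₁) := NSet.map_nsMul hf.map_mul A B
  refine ⟨?_, ?_, fun A B _ => map_mul A B, fun l hl => ?_⟩
  · exact (NSet.map_singleton f _).trans (by rw [hf.map_one]; rfl)
  · exact (NSet.map_singleton f _).trans (by rw [hf.map_zero]; rfl)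
  · have h := H₁.image_fuzzy_sum_subset hf.map_zero hf.map_add _ ⟨H₁.zero, hl, hf.map_zero⟩
    have map_fuzzy_mul : NSet.map f ∘ (fun p : NSet R₁ × NSet R₁ => H₁.Fuzzy.mul p.1 p.2) =
        fun p => H₂.Fuzzy.mul (NSet.map f p.1) (NSet.map f p.2) :=
      funext fun p => map_mul p.1 p.2
    rwa [List.map_map, map_fuzzy_mul] at h
end

section
/- For every hyperfield F, the fuzzy ring 𝓕(F) is field-like: for every pair of units A, B of 𝓕(F) there exists C ∈ 𝓕(F)^× ∪ {0} with A + B + C ∈ 𝓕(F)₀. -/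
/-! Given units `A ∋ a` and `B ∋ b`, pick `d ∈ a + b` and take `C = {-d}`: then `0 ∈ d + (-d) ⊆ A + B + C`,
and in a hyperfield a singleton is either a unit of `𝓕(F)` or its zero. -/

open Set

theorem mem_sAddOf {R : Type*} {add : R → R → Set R} {X Y : Set R} {x y z : R}
    (hx : x ∈ X) (hy : y ∈ Y) (hz : z ∈ add x y) : z ∈ sAddOf add X Y :=
  mem_biUnion hx (mem_biUnion hy hz)

theorem Hyperring.zero_mem_add_neg {R : Type*} (H : Hyperring R) (a : R) :
    H.zero ∈ H.add a (H.neg a) :=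
  (H.isHyperring.exists_neg a).exists.choose_spec

/-- For every hyperfield `F`, the fuzzy ring `𝓕(F)` is field-like:
for all units `A, B` of `𝓕(F)` there exists `C ∈ 𝓕(F)^× ∪ {0}` with `A + B + C` null. -/
theorem fuzzy_of_hyperfield_fieldLike {R : Type*} (F : Hyperfield R) :
    F.toHyperring.Fuzzy.FieldLike := by
  intro A B _ _
  obtain ⟨a, ha⟩ := A.2
  obtain ⟨b, hb⟩ := B.2
  obtain ⟨d, hd⟩ := F.isHyperring.add_nonempty a b
  exact ⟨(toG F (F.neg d)).1, (toG F (F.neg d)).2,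
    mem_sAddOf (mem_sAddOf ha hb hd) rfl (F.zero_mem_add_neg d)⟩
end

section
/- For every hyperfield F, the map x ↦ {x} is an isomorphism of hyperfields from F to 𝒢(𝓕(F)): it is a multiplicative bijection from F onto 𝓕(F)^× ∪ {0} sending 0 to {0} and 1 to {1}, and for all a,b,c ∈ F one has c ∈ a + b in F if and only if {c} ∈ {a} ⊕ {b} in 𝒢(𝓕(F)). -/
open Set

/-! Units of `𝓕(F)` are singletons: if `A × B = {1}`, any two elements of `A` are inverse to
the same `b ∈ B`, hence equal. So `x ↦ {x}` is onto `𝓕(F)^× ∪ {0}`. Since `ε × {c} = {-c}`,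
`{c} ∈ {a} ⊕ {b}` says `0 ∈ (a + b) + (-c)`, which by uniqueness of hyperinverses means
`c = -(-c) ∈ a + b`. -/

theorem sAddOf_singleton_singleton {R : Type*} (add : R → R → Set R) (a b : R) :
    sAddOf add {a} {b} = add a b := by
  simp [sAddOf]

namespace Hyperring

variable {R : Type*} (H : Hyperring R)

theorem zero_mem_add_neg_s8 (a : R) : H.zero ∈ H.add a (H.neg a) :=
  (H.isHyperring.exists_neg a).exists.choose_spec

theorem zero_mem_add_iff {a b : R} : H.zero ∈ H.add a b ↔ b = H.neg a :=
  ⟨fun h => (H.isHyperring.exists_neg a).unique h (H.zero_mem_add_neg_s8 a),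
    fun h => h ▸ H.zero_mem_add_neg_s8 a⟩

theorem neg_neg (a : R) : H.neg (H.neg a) = a := by
  refine (H.zero_mem_add_iff.1 ?_).symm
  rw [H.isHyperring.add_comm]
  exact H.zero_mem_add_neg_s8 a

theorem neg_one_mul (a : R) : H.mul (H.neg H.one) a = H.neg a := by
  refine H.zero_mem_add_iff.1 ?_
  have h := Set.mem_image_of_mem (H.mul a) (H.zero_mem_add_neg_s8 H.one)
  rwa [H.isHyperring.distrib, H.isHyperring.mul_zero, H.isHyperring.mul_one,
    H.isHyperring.mul_comm] at h

theorem zero_mem_sAddOf_singleton_iff (X : Set R) (c : R) :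
    H.zero ∈ sAddOf H.add X {c} ↔ H.neg c ∈ X := by
  simp only [sAddOf, Set.mem_iUnion, Set.mem_singleton_iff, exists_prop, exists_eq_left]
  constructor
  · rintro ⟨x, hx, h0⟩
    rw [H.isHyperring.add_comm, H.zero_mem_add_iff] at h0
    rwa [← h0]
  · intro hc
    refine ⟨H.neg c, hc, ?_⟩
    rw [H.isHyperring.add_comm]
    exact H.zero_mem_add_neg_s8 c

theorem mem_add_iff_zero_mem_sAddOf_neg (a b c : R) :
    c ∈ H.add a b ↔ H.zero ∈ sAddOf H.add (H.add a b) {H.neg c} := by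
  rw [zero_mem_sAddOf_singleton_iff, neg_neg]

theorem eq_singleton_of_isUnit_fuzzy {A : NSet R} (hA : H.Fuzzy.IsUnit A) :
    ∃ a, A.1 = {a} := by
  obtain ⟨B, hAB⟩ := hA
  have hAB : Set.image2 H.mul A.1 B.1 = {H.one} := congrArg Subtype.val hAB
  obtain ⟨a, ha⟩ := A.2
  obtain ⟨b, hb⟩ := B.2
  have inv_b : ∀ x ∈ A.1, H.mul x b = H.one := fun x hx => by
    simpa [hAB] using Set.mem_image2_of_mem (f := H.mul) hx hb
  refine ⟨a, Set.eq_singleton_iff_unique_mem.2 ⟨ha, fun x hx => ?_⟩⟩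
  calc x = H.mul (H.mul a b) x := by
        rw [inv_b a ha, H.isHyperring.mul_comm, H.isHyperring.mul_one]
    _ = H.mul a (H.mul x b) := by
        rw [H.isHyperring.mul_assoc, H.isHyperring.mul_comm b x]
    _ = a := by rw [inv_b x hx, H.isHyperring.mul_one]

end Hyperring

section toG

variable {R : Type*} (F : Hyperfield R)

theorem toG_injective : Function.Injective (toG F) := fun _ _ h =>
  Set.singleton_eq_singleton_iff.1 (congrArg (fun A => A.1.1) h)

theorem toG_surjective : Function.Surjective (toG F) := by
  rintro ⟨A, hA | rfl⟩
  · obtain ⟨a, ha⟩ := F.toHyperring.eq_singleton_of_isUnit_fuzzy hA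
    exact ⟨a, Subtype.ext (Subtype.ext ha.symm)⟩
  · exact ⟨F.zero, rfl⟩

theorem toG_mul (a b : R) :
    (toG F (F.mul a b)).1 = F.toHyperring.Fuzzy.mul (toG F a).1 (toG F b).1 :=
  Subtype.ext Set.image2_singleton.symm

theorem toG_mem_Gadd_iff (a b c : R) :
    toG F c ∈ Gadd F.toHyperring.Fuzzy (toG F a) (toG F b) ↔
      F.zero ∈ sAddOf F.add (F.add a b) {F.toHyperring.neg c} := by
  change F.zero ∈ sAddOf F.add (sAddOf F.add {a} {b})
      (Set.image2 F.mul {F.toHyperring.neg F.one} {c}) ↔ _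
  rw [Set.image2_singleton, sAddOf_singleton_singleton, F.toHyperring.neg_one_mul]

end toG

/-- For every hyperfield `F`, the map `x ↦ {x}` is an isomorphism of
hyperfields `F ≅ 𝒢(𝓕(F))`: a multiplicative bijection onto `𝓕(F)^× ∪ {0}` sending `0`
to `{0}` and `1` to `{1}`, with `c ∈ a + b` iff `{c} ∈ {a} ⊕ {b}`. -/
theorem toG_isIso {R : Type*} (F : Hyperfield R) :
    Function.Bijective (toG F) ∧
    (toG F F.zero).1 = F.toHyperring.Fuzzy.zero ∧
    (toG F F.one).1 = F.toHyperring.Fuzzy.one ∧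
    (∀ a b : R, (toG F (F.mul a b)).1 =
      F.toHyperring.Fuzzy.mul (toG F a).1 (toG F b).1) ∧
    (∀ a b c : R,
      c ∈ F.add a b ↔ toG F c ∈ Gadd F.toHyperring.Fuzzy (toG F a) (toG F b)) :=
  ⟨⟨toG_injective F, toG_surjective F⟩, rfl, rfl, toG_mul F, fun a b c => by
    rw [toG_mem_Gadd_iff]
    exact F.toHyperring.mem_add_iff_zero_mem_sAddOf_neg a b c⟩
end

section
/- If f : F → F' is a strict homomorphism of doubly-distributive hyperfields, then the induced map S(F) → S(F') sending A to f(A) = {f(a) : a ∈ A} is well defined (it sends finite hypersums to finite hypersums) and is a homomorphism of semirings. -/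
open Set

section ImageOfSums

variable {R S : Type*} {addR : R → R → Set R} {addS : S → S → Set S} {f : R → S}

lemma image_sAddOf (h : ∀ a b, f '' addR a b = addS (f a) (f b)) (A B : Set R) :
    f '' sAddOf addR A B = sAddOf addS (f '' A) (f '' B) := by
  ext s
  simp only [sAddOf, Set.mem_image, Set.mem_iUnion]
  constructor
  · rintro ⟨r, ⟨a, ha, b, hb, hr⟩, rfl⟩
    exact ⟨f a, ⟨a, ha, rfl⟩, f b, ⟨b, hb, rfl⟩, h a b ▸ ⟨r, hr, rfl⟩⟩
  · rintro ⟨_, ⟨a, ha, rfl⟩, _, ⟨b, hb, rfl⟩, hs⟩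
    rw [← h a b] at hs
    obtain ⟨r, hr, rfl⟩ := hs
    exact ⟨r, ⟨a, ha, b, hb, hr⟩, rfl⟩

lemma image_foldr_sAddOf (h : ∀ a b, f '' addR a b = addS (f a) (f b)) (l : List R)
    (X : Set R) :
    f '' l.foldr (fun x Y => sAddOf addR {x} Y) X =
      (l.map f).foldr (fun y Y => sAddOf addS {y} Y) (f '' X) := by
  induction l with
  | nil => rfl
  | cons x l ih => simp only [List.foldr_cons, List.map_cons, image_sAddOf h, ih,
      Set.image_singleton]

lemma image_mem_sumSet (h : ∀ a b, f '' addR a b = addS (f a) (f b)) {A : Set R}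
    (hA : A ∈ sumSet addR) : f '' A ∈ sumSet addS := by
  obtain ⟨a, l, rfl⟩ := hA
  exact ⟨f a, l.map f, by rw [image_foldr_sAddOf h, Set.image_singleton]⟩

end ImageOfSums

theorem strict_hom_induces_semiring_hom_general {R S : Type*}
    (F : Hyperfield R) (F' : Hyperfield S)
    (f : R → S)
    (hf : IsStrictHyperringHom F.add F.mul F.zero F.one
      F'.add F'.mul F'.zero F'.one f) :
    (∀ A ∈ sumSet F.add, f '' A ∈ sumSet F'.add) ∧
    (f '' {F.zero} = {F'.zero}) ∧ (f '' {F.one} = {F'.one}) ∧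
    (∀ A ∈ sumSet F.add, ∀ B ∈ sumSet F.add,
      f '' sAddOf F.add A B = sAddOf F'.add (f '' A) (f '' B)) ∧
    (∀ A ∈ sumSet F.add, ∀ B ∈ sumSet F.add,
      f '' Set.image2 F.mul A B = Set.image2 F'.mul (f '' A) (f '' B)) :=
  ⟨fun _ hA => image_mem_sumSet hf.map_add hA,
    by rw [Set.image_singleton, hf.map_zero],
    by rw [Set.image_singleton, hf.map_one],
    fun A _ B _ => image_sAddOf hf.map_add A B,
    fun _ _ _ _ => Set.image_image2_distrib hf.map_mul⟩

/-- If `f : F → F'` is a strict homomorphism of doubly-distributive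
hyperfields, then `A ↦ f(A)` sends finite hypersums to finite hypersums (so it gives a
well-defined map `S(F) → S(F')`), and this map is a homomorphism of semirings. -/
theorem strict_hom_induces_semiring_hom {R S : Type*}
    (F : Hyperfield R) (F' : Hyperfield S)
    (hF : F.DoublyDistributive) (hF' : F'.DoublyDistributive)
    (f : R → S)
    (hf : IsStrictHyperringHom F.add F.mul F.zero F.one
      F'.add F'.mul F'.zero F'.one f) :
    (∀ A ∈ sumSet F.add, f '' A ∈ sumSet F'.add) ∧
    (f '' {F.zero} = {F'.zero}) ∧ (f '' {F.one} = {F'.one}) ∧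
    (∀ A ∈ sumSet F.add, ∀ B ∈ sumSet F.add,
      f '' sAddOf F.add A B = sAddOf F'.add (f '' A) (f '' B)) ∧
    (∀ A ∈ sumSet F.add, ∀ B ∈ sumSet F.add,
      f '' Set.image2 F.mul A B = Set.image2 F'.mul (f '' A) (f '' B)) :=
  strict_hom_induces_semiring_hom_general F F' f hf
end
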